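/- arXiv:1902.00502 — 6 statements merged into one kernel-verified Lean document; each statement's English description precedes it below -/
import Mathlib

section
/- The mutated exchange matrix factors as a matrix product: μ_k(B̃) = E_k B̃ F_k, where E_k is the m×m matrix with (E_k)_{ij} = δ_{ij} if j ≠ k, -1 if i = j = k, max(0, -b_{ik}) if i ≠ j = k; and F_k is the n×n matrix with (F_k)_{ij} = δ_{ij} if i ≠ k, -1 if i = j = k, max(0, b_{kj}) if i = k ≠ j. -/
/-- Matrix mutation in direction `k` (rows `Fin m`, columns = exchangeable indices `Fin n`
identified with rows via the injection `ε`). -/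
def mutate {m n : ℕ} (B : Matrix (Fin m) (Fin n) ℤ) (ε : Fin n → Fin m) (k : Fin n) :
    Matrix (Fin m) (Fin n) ℤ :=
  Matrix.of fun i j =>
    if i = ε k ∨ j = k then - B i j
    else B i j + (|B i k| * B (ε k) j + B i k * |B (ε k) j|) / 2

/-- `E_k`: the `m×m` matrix with `(E_k)_{ij} = δ_{ij}` if `j ≠ k`, `-1` if `i = j = k`,
`max(0, -b_{ik})` if `i ≠ j = k` (here the index `k`, viewed as a row index, is `ε k`). -/
def Emat {m n : ℕ} (B : Matrix (Fin m) (Fin n) ℤ) (ε : Fin n → Fin m) (k : Fin n) :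
    Matrix (Fin m) (Fin m) ℤ :=
  Matrix.of fun i j =>
    if j ≠ ε k then (if i = j then 1 else 0)
    else if i = ε k then -1 else max 0 (-(B i k))

/-- `F_k`: the `n×n` matrix with `(F_k)_{ij} = δ_{ij}` if `i ≠ k`, `-1` if `i = j = k`,
`max(0, b_{kj})` if `i = k ≠ j`. -/
def Fmat {m n : ℕ} (B : Matrix (Fin m) (Fin n) ℤ) (ε : Fin n → Fin m) (k : Fin n) :
    Matrix (Fin n) (Fin n) ℤ :=
  Matrix.of fun i j =>
    if i ≠ k then (if i = j then 1 else 0)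
    else if j = k then -1 else max 0 (B (ε k) j)

lemma half_id (a b : ℤ) : (|a| * b + a * |b|) / 2 = max 0 (-a) * b + a * max 0 b := by
  have h : |a| * b + a * |b| = 2 * (max 0 (-a) * b + a * max 0 b) := by
    rcases le_total 0 a with ha | ha <;> rcases le_total 0 b with hb | hb
    · rw [abs_of_nonneg ha, abs_of_nonneg hb, max_eq_left (by linarith), max_eq_right hb]; ring
    · rw [abs_of_nonneg ha, abs_of_nonpos hb, max_eq_left (by linarith), max_eq_left hb]; ring
    · rw [abs_of_nonpos ha, abs_of_nonneg hb, max_eq_right (by linarith), max_eq_right hb]; ring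
    · rw [abs_of_nonpos ha, abs_of_nonpos hb, max_eq_right (by linarith), max_eq_left hb]; ring
  rw [h, Int.mul_ediv_cancel_left _ two_ne_zero]

/-- The mutated exchange matrix factors as `μ_k(B̃) = E_k B̃ F_k`. -/
theorem stmt5 {m n : ℕ} (B : Matrix (Fin m) (Fin n) ℤ) (ε : Fin n → Fin m)
    (hε : Function.Injective ε) (k : Fin n)
    (hskew : ∃ d : Fin n → ℤ, (∀ j, 0 < d j) ∧
      ∀ i j : Fin n, d i * B (ε i) j = - (d j * B (ε j) i)) :
    mutate B ε k = Emat B ε k * B * Fmat B ε k := by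
  obtain ⟨d, hd, hsk⟩ := hskew
  have hBkk : B (ε k) k = 0 := by
    have h := hsk k k
    have h2 : d k * B (ε k) k = 0 := by linarith
    rcases mul_eq_zero.mp h2 with h3 | h3
    · exact absurd h3 (ne_of_gt (hd k))
    · exact h3
  set c : Fin m → ℤ := fun i => if i = ε k then -2 else max 0 (-(B i k)) with hc
  set e : Fin n → ℤ := fun j => if j = k then -2 else max 0 (B (ε k) j) with he
  have hEB : ∀ i q, (Emat B ε k * B) i q = B i q + c i * B (ε k) q := by
    intro i q
    have hterm : ∀ p, Emat B ε k i p = (if i = p then (1:ℤ) else 0) +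
        (if p = ε k then c i else 0) := by
      intro p
      simp only [Emat, Matrix.of_apply, hc]
      by_cases hp : p = ε k
      · subst hp
        by_cases hi : i = ε k <;> simp [hi]
      · simp [hp]
    rw [Matrix.mul_apply]
    simp only [hterm, add_mul, Finset.sum_add_distrib, ite_mul, one_mul, zero_mul]
    rw [Finset.sum_ite_eq Finset.univ i (fun p => B p q),
        Finset.sum_ite_eq' Finset.univ (ε k) (fun p => c i * B p q)]
    simp
  ext i j
  rw [Matrix.mul_apply]
  have hterm : ∀ q, Fmat B ε k q j = (if q = j then (1:ℤ) else 0) +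
      (if q = k then e j else 0) := by
    intro q
    simp only [Fmat, Matrix.of_apply, he]
    by_cases hq : q = k
    · by_cases hj : j = k
      · simp [hq, hj]
      · have hqj : ¬ q = j := by rw [hq]; exact fun h => hj h.symm
        simp [hq, hj, hqj, hq ▸ hqj]
    · simp [hq]
  simp only [hterm, mul_add, Finset.sum_add_distrib, mul_ite, mul_one, mul_zero]
  rw [Finset.sum_ite_eq' Finset.univ j (fun q => (Emat B ε k * B) i q),
      Finset.sum_ite_eq' Finset.univ k (fun q => (Emat B ε k * B) i q * e j)]
  simp only [Finset.mem_univ, if_true, hEB]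
  simp only [mutate, Matrix.of_apply, hc, he]
  by_cases hi : i = ε k <;> by_cases hj : j = k
  · subst hi; subst hj; simp [hBkk]
  · subst hi; simp [hj, hBkk]; ring
  · subst hj; simp [hi, hBkk]; ring
  · simp only [hi, hj, if_false, or_self, ite_false, hBkk, mul_zero, add_zero]
    rw [half_id]
    ring
end

section
/- Mutation preserves compatibility of pairs: if (Λ, B̃) is a compatible pair (Λ an m×m skew-symmetric integer matrix, B̃ an m×n integer matrix with Σ_k b_{ki} λ_{kj} = δ_{ij} d_i for positive integers d_i), then for any exchangeable index k, the pair (E_k^T Λ E_k, E_k B̃ F_k) is also compatible with the same integers d_i. -/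
/-- `E_k` is an involution. -/
lemma Emat_sq {m n : ℕ} (B : Matrix (Fin m) (Fin n) ℤ) (ε : Fin n → Fin m) (k : Fin n) :
    Emat B ε k * Emat B ε k = 1 := by
  ext i j
  rw [Matrix.mul_apply]
  by_cases hj : j = ε k
  · subst hj
    rw [← Finset.sum_erase_add _ _ (Finset.mem_univ (ε k))]
    by_cases hi : i = ε k
    · subst hi
      rw [Finset.sum_eq_zero]
      · simp [Emat]
      · intro l hl
        simp only [Finset.mem_erase, Finset.mem_univ, and_true] at hl
        simp [Emat, hl, Ne.symm hl]
    · rw [Finset.sum_eq_single_of_mem i (by simp [Finset.mem_erase, hi])]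
      · simp [Emat, hi]
      · intro l hl hli
        simp only [Finset.mem_erase, Finset.mem_univ, and_true] at hl
        simp [Emat, hl, Ne.symm hli]
  · rw [Finset.sum_eq_single_of_mem j (Finset.mem_univ j)]
    · simp [Emat, hj, Matrix.one_apply]
    · intro l hl hlj
      simp [Emat, hj, hlj, Ne.symm hlj]

/-- Compatibility implies a skew-symmetrizability-type identity. -/
lemma skew_aux {m n : ℕ} (Λ : Matrix (Fin m) (Fin m) ℤ) (B : Matrix (Fin m) (Fin n) ℤ)
    (ε : Fin n → Fin m) (hΛ : Λ.transpose = -Λ) (d : Fin n → ℤ)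
    (hcomp : ∀ (i : Fin n) (j : Fin m), ∑ l, B l i * Λ l j = if ε i = j then d i else 0)
    (i j : Fin n) : d i * B (ε i) j = -(d j * B (ε j) i) := by
  have hsk : ∀ a b, Λ a b = -Λ b a := by
    intro a b
    have := congrFun (congrFun hΛ b) a
    simpa [Matrix.transpose_apply] using this
  have h1 : ∑ l', (∑ l, B l i * Λ l l') * B l' j = d i * B (ε i) j := by
    simp [hcomp]
  have h2 : ∑ l', (∑ l, B l i * Λ l l') * B l' j = -(d j * B (ε j) i) := by
    calc ∑ l', (∑ l, B l i * Λ l l') * B l' j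
        = ∑ l', ∑ l, B l i * Λ l l' * B l' j := by
          simp [Finset.sum_mul]
      _ = ∑ l, ∑ l', B l i * Λ l l' * B l' j := Finset.sum_comm
      _ = ∑ l, -((∑ l', B l' j * Λ l' l) * B l i) := by
          refine Finset.sum_congr rfl fun l _ => ?_
          rw [Finset.sum_mul, ← Finset.sum_neg_distrib]
          refine Finset.sum_congr rfl fun l' _ => ?_
          rw [hsk l l']
          ring
      _ = -(d j * B (ε j) i) := by
          simp [hcomp, Finset.sum_neg_distrib]
  rw [← h1, h2]

/-- The key combinatorial identity `Fᵀ D E = D`. -/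
lemma FDE_aux {m n : ℕ} (B : Matrix (Fin m) (Fin n) ℤ) (ε : Fin n → Fin m)
    (hε : Function.Injective ε) (k : Fin n) (d : Fin n → ℤ) (hd : ∀ i, 0 < d i)
    (hskew : ∀ i j : Fin n, d i * B (ε i) j = -(d j * B (ε j) i))
    (i : Fin n) (j : Fin m) :
    ∑ a, Fmat B ε k a i * (d a * Emat B ε k (ε a) j) = if ε i = j then d i else 0 := by
  by_cases hj : j = ε k
  · subst hj
    rw [← Finset.sum_erase_add _ _ (Finset.mem_univ k)]
    by_cases hik : i = k
    · subst hik
      rw [Finset.sum_eq_zero (fun a ha => by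
        simp only [Finset.mem_erase, Finset.mem_univ, and_true] at ha
        simp [Fmat, ha])]
      simp [Fmat, Emat]
    · rw [Finset.sum_eq_single_of_mem i (by simp [Finset.mem_erase, hik])
        (fun a ha hai => by
          simp only [Finset.mem_erase, Finset.mem_univ, and_true] at ha
          simp [Fmat, ha, hai])]
      have hne : ε i ≠ ε k := fun h => hik (hε h)
      have e1 : Fmat B ε k i i = 1 := by simp [Fmat, hik]
      have e2 : Emat B ε k (ε i) (ε k) = max 0 (-(B (ε i) k)) := by simp [Emat, hne]
      have e3 : Fmat B ε k k i = max 0 (B (ε k) i) := by simp [Fmat, hik, Ne.symm hik]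
      have e4 : Emat B ε k (ε k) (ε k) = -1 := by simp [Emat]
      rw [e1, e2, e3, e4, if_neg hne]
      have hs := hskew i k
      rcases le_or_gt (B (ε k) i) 0 with h | h
      · have h1 : max 0 (B (ε k) i) = 0 := max_eq_left h
        have h2 : max 0 (-(B (ε i) k)) = 0 := by
          have hBik : 0 ≤ B (ε i) k := by
            by_contra hc
            push_neg at hc
            nlinarith [hd i, hd k]
          omega
        rw [h1, h2]; ring
      · have h1 : max 0 (B (ε k) i) = B (ε k) i := max_eq_right h.le
        have hBik : B (ε i) k < 0 := by
          by_contra hc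
          push_neg at hc
          nlinarith [hd i, hd k]
        have h2 : max 0 (-(B (ε i) k)) = -(B (ε i) k) := max_eq_right (by omega)
        rw [h1, h2]
        nlinarith [hd i, hd k]
  · have hE : ∀ a : Fin n, Emat B ε k (ε a) j = if ε a = j then 1 else 0 := by
      intro a; simp [Emat, hj]
    by_cases hij : ε i = j
    · rw [Finset.sum_eq_single_of_mem i (Finset.mem_univ i)
        (fun a _ hai => by
          have : ε a ≠ j := fun h => hai (hε (h.trans hij.symm))
          simp [hE, this])]
      have hik : i ≠ k := by rintro rfl; exact hj hij.symm
      rw [hE i]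
      simp [Fmat, hik, hij]
    · rw [Finset.sum_eq_zero, if_neg hij]
      intro a _
      by_cases ha : ε a = j
      · have hai : a ≠ i := fun h => hij (h ▸ ha)
        have hak : a ≠ k := by rintro rfl; exact hj ha.symm
        simp [Fmat, hak, hai, Ne.symm hai]
      · simp [hE, ha]

/-- Mutation preserves compatibility of pairs: if `(Λ, B̃)` is a compatible
pair (`Λ` skew-symmetric `m×m`, `B̃` an `m×n` integer matrix with
`Σ_k b_{ki} λ_{kj} = δ_{ij} d_i` for positive integers `d_i`, where `δ_{ij}` compares the
column index `i`, viewed as a row via `ε`, with `j`), then for any exchangeable index `k`,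
the pair `(E_kᵀ Λ E_k, E_k B̃ F_k)` is also compatible with the same integers `d_i`. -/
theorem stmt6 {m n : ℕ} (Λ : Matrix (Fin m) (Fin m) ℤ) (B : Matrix (Fin m) (Fin n) ℤ)
    (ε : Fin n → Fin m) (hε : Function.Injective ε) (k : Fin n)
    (hΛ : Λ.transpose = -Λ)
    (d : Fin n → ℤ) (hd : ∀ i, 0 < d i)
    (hcomp : ∀ (i : Fin n) (j : Fin m), ∑ l, B l i * Λ l j = if ε i = j then d i else 0) :
    ∀ (i : Fin n) (j : Fin m),
      ∑ l, (Emat B ε k * B * Fmat B ε k) l i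
          * ((Emat B ε k).transpose * Λ * Emat B ε k) l j
        = if ε i = j then d i else 0 := by
  intro i j
  set E := Emat B ε k with hEdef
  set F := Fmat B ε k with hFdef
  have hEE : E.transpose * E.transpose = 1 := by
    rw [← Matrix.transpose_mul, Emat_sq, Matrix.transpose_one]
  have hD : B.transpose * Λ = Matrix.of (fun a b => if ε a = b then d a else 0) := by
    ext a b
    simp [Matrix.mul_apply, Matrix.transpose_apply, hcomp]
  have hmul : (E * B * F).transpose * (E.transpose * Λ * E)
      = F.transpose * ((Matrix.of fun a b => if ε a = b then d a else 0) * E) := by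
    calc (E * B * F).transpose * (E.transpose * Λ * E)
        = F.transpose * (B.transpose * ((E.transpose * E.transpose) * (Λ * E))) := by
          simp only [Matrix.transpose_mul, Matrix.mul_assoc]
      _ = F.transpose * ((B.transpose * Λ) * E) := by
          rw [hEE, Matrix.one_mul, Matrix.mul_assoc]
      _ = F.transpose * ((Matrix.of fun a b => if ε a = b then d a else 0) * E) := by
          rw [hD]
  have hlhs : ((E * B * F).transpose * (E.transpose * Λ * E)) i j
      = ∑ l, (E * B * F) l i * (E.transpose * Λ * E) l j := by
    rw [Matrix.mul_apply]
    simp only [Matrix.transpose_apply]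
  rw [← hlhs, hmul]
  have hDE : ∀ a : Fin n,
      ((Matrix.of fun a b => if ε a = b then d a else 0) * E) a j = d a * E (ε a) j := by
    intro a
    rw [Matrix.mul_apply]
    rw [Finset.sum_eq_single_of_mem (ε a) (Finset.mem_univ _)
      (fun b _ hb => by simp [Ne.symm hb])]
    simp
  rw [Matrix.mul_apply]
  simp only [Matrix.transpose_apply, hDE]
  exact FDE_aux B ε hε k d hd (skew_aux Λ B ε hΛ d hcomp) i j
end

section
/- Mutation of compatible pairs is involutive: for a compatible pair (Λ, B̃) and exchangeable index k, μ_k(μ_k(Λ, B̃)) = (Λ, B̃), where μ_k(Λ, B̃) = (E_k^T Λ E_k, E_k B̃ F_k) with E_k, F_k defined from B̃ (and the inner mutation uses the matrices defined from μ_k(B̃)). -/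
open Matrix in
lemma vmv_mul_vmv {m n p : ℕ} (u : Fin m → ℤ) (v x : Fin n → ℤ) (y : Fin p → ℤ) :
    vecMulVec u v * vecMulVec x y = (∑ l, v l * x l) • vecMulVec u y := by
  ext i j
  simp only [Matrix.mul_apply, vecMulVec_apply, Matrix.smul_apply, smul_eq_mul]
  rw [Finset.sum_mul]
  exact Finset.sum_congr rfl fun l _ => by ring

open Matrix in
lemma mul_vmv {m n p : ℕ} (A : Matrix (Fin m) (Fin n) ℤ) (x : Fin n → ℤ) (y : Fin p → ℤ) :
    A * vecMulVec x y = vecMulVec (A.mulVec x) y := by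
  ext i j
  simp only [Matrix.mul_apply, vecMulVec_apply, Matrix.mulVec, dotProduct]
  rw [Finset.sum_mul]
  exact Finset.sum_congr rfl fun l _ => by ring

open Matrix in
lemma vmv_mul_mat {m n p : ℕ} (u : Fin m → ℤ) (v : Fin n → ℤ) (A : Matrix (Fin n) (Fin p) ℤ) :
    vecMulVec u v * A = vecMulVec u (Matrix.vecMul v A) := by
  ext i j
  simp only [Matrix.mul_apply, vecMulVec_apply, Matrix.vecMul, dotProduct]
  rw [Finset.mul_sum]
  exact Finset.sum_congr rfl fun l _ => by ring

open Matrix in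
lemma vmv_transpose {m n : ℕ} (u : Fin m → ℤ) (v : Fin n → ℤ) :
    (vecMulVec u v)ᵀ = vecMulVec v u := by
  ext i j; simp [vecMulVec_apply, mul_comm]

open Matrix in
lemma Emat_eq {m n : ℕ} (B : Matrix (Fin m) (Fin n) ℤ) (ε : Fin n → Fin m) (k : Fin n) :
    Emat B ε k = 1 + vecMulVec (fun i => if i = ε k then -2 else max 0 (-(B i k)))
      (fun j => if j = ε k then 1 else 0) := by
  ext i j
  simp only [Emat, Matrix.of_apply, Matrix.add_apply, Matrix.one_apply, vecMulVec_apply, ne_eq]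
  by_cases hj : j = ε k
  · by_cases hi : i = ε k <;> simp [hj, hi]
  · simp [hj]

open Matrix in
lemma Fmat_eq {m n : ℕ} (B : Matrix (Fin m) (Fin n) ℤ) (ε : Fin n → Fin m) (k : Fin n) :
    Fmat B ε k = 1 + vecMulVec (fun i => if i = k then 1 else 0)
      (fun j => if j = k then -2 else max 0 (B (ε k) j)) := by
  ext i j
  simp only [Fmat, Matrix.of_apply, Matrix.add_apply, Matrix.one_apply, vecMulVec_apply, ne_eq]
  by_cases hi : i = k
  · by_cases hj : j = k
    · simp [hi, hj]
    · have hkj : ¬k = j := fun h => hj h.symm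
      simp [hi, hj, hkj]
  · simp [hi]

/-- Mutation of compatible pairs is involutive: for a compatible pair
`(Λ, B̃)` and exchangeable index `k`, `μ_k(μ_k(Λ, B̃)) = (Λ, B̃)`, where
`μ_k(Λ, B̃) = (E_kᵀ Λ E_k, E_k B̃ F_k)` and the inner (second) mutation uses the matrices
`E'_k, F'_k` defined from the once-mutated exchange matrix `μ_k(B̃)`. -/
theorem stmt7 {m n : ℕ} (Λ : Matrix (Fin m) (Fin m) ℤ) (B : Matrix (Fin m) (Fin n) ℤ)
    (ε : Fin n → Fin m) (hε : Function.Injective ε) (k : Fin n)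
    (hΛ : Λ.transpose = -Λ)
    (d : Fin n → ℤ) (hd : ∀ i, 0 < d i)
    (hcomp : ∀ (i : Fin n) (j : Fin m), ∑ l, B l i * Λ l j = if ε i = j then d i else 0) :
    ((Emat (Emat B ε k * B * Fmat B ε k) ε k).transpose
        * ((Emat B ε k).transpose * Λ * Emat B ε k)
        * Emat (Emat B ε k * B * Fmat B ε k) ε k = Λ)
    ∧ (Emat (Emat B ε k * B * Fmat B ε k) ε k
        * (Emat B ε k * B * Fmat B ε k)
        * Fmat (Emat B ε k * B * Fmat B ε k) ε k = B) := by
  classical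
  open Matrix in
  -- skew-symmetry entrywise
  have hskew : ∀ i j, Λ i j = - Λ j i := by
    intro i j
    have := congrFun (congrFun hΛ j) i
    simpa [Matrix.transpose_apply] using this
  -- the key vanishing diagonal entry
  have h0 : B (ε k) k = 0 := by
    have hT : (∑ j, ∑ l, B l k * Λ l j * B j k) = d k * B (ε k) k := by
      calc (∑ j, ∑ l, B l k * Λ l j * B j k)
          = ∑ j, (∑ l, B l k * Λ l j) * B j k := by
            exact Finset.sum_congr rfl fun j _ => (Finset.sum_mul ..).symm
        _ = ∑ j, (if ε k = j then d k else 0) * B j k :=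
            Finset.sum_congr rfl fun j _ => by rw [hcomp k j]
        _ = d k * B (ε k) k := by simp
    have hTneg : (∑ j, ∑ l, B l k * Λ l j * B j k)
        = -(∑ j, ∑ l, B l k * Λ l j * B j k) := by
      conv_lhs => rw [Finset.sum_comm]
      rw [← Finset.sum_neg_distrib]
      refine Finset.sum_congr rfl fun a _ => ?_
      rw [← Finset.sum_neg_distrib]
      refine Finset.sum_congr rfl fun b _ => ?_
      rw [hskew b a]; ring
    have hz : d k * B (ε k) k = 0 := by linarith [hT, hTneg]
    rcases mul_eq_zero.mp hz with h | h
    · exact absurd h (hd k).ne'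
    · exact h
  set e1 : Fin m → ℤ := fun i => if i = ε k then 1 else 0 with he1
  set eK : Fin n → ℤ := fun j => if j = k then 1 else 0 with heK
  set u : Fin m → ℤ := fun i => B i k with hu
  set v : Fin n → ℤ := fun j => B (ε k) j with hv
  set c : Fin m → ℤ := fun i => if i = ε k then -2 else max 0 (-(B i k)) with hc
  set r : Fin n → ℤ := fun j => if j = k then -2 else max 0 (B (ε k) j) with hr
  have hE : Emat B ε k = 1 + vecMulVec c e1 := Emat_eq B ε k
  have hF : Fmat B ε k = 1 + vecMulVec eK r := Fmat_eq B ε k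
  have hvecMul : Matrix.vecMul e1 B = v := by
    funext j
    simp [Matrix.vecMul, dotProduct, he1, hv, Finset.sum_ite_eq]
  have hmulVec : B.mulVec eK = u := by
    funext i
    simp [Matrix.mulVec, dotProduct, heK, hu, Finset.sum_ite_eq]
  -- once-mutated matrix
  have hB' : Emat B ε k * B * Fmat B ε k = B + vecMulVec u r + vecMulVec c v := by
    rw [hE, hF]
    simp only [Matrix.add_mul, Matrix.mul_add, Matrix.one_mul, Matrix.mul_one]
    rw [vmv_mul_mat, hvecMul, vmv_mul_vmv, mul_vmv, hmulVec]
    have hz : (∑ l, v l * eK l) = 0 := by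
      simp [hv, heK, Finset.sum_ite_eq', h0]
    rw [hz, zero_smul, add_zero]
    abel
  have hB'col : ∀ i, (Emat B ε k * B * Fmat B ε k) i k = -B i k := by
    intro i
    rw [hB']
    simp only [Matrix.add_apply, vecMulVec_apply, hu, hr, hv, h0]
    simp
    ring
  have hB'row : ∀ j, (Emat B ε k * B * Fmat B ε k) (ε k) j = -B (ε k) j := by
    intro j
    rw [hB']
    simp only [Matrix.add_apply, vecMulVec_apply, hu, hc, hv, h0]
    simp
    ring
  set c' : Fin m → ℤ := fun i => if i = ε k then -2 else max 0 (B i k) with hc'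
  set r' : Fin n → ℤ := fun j => if j = k then -2 else max 0 (-(B (ε k) j)) with hr'
  have hcfun : (fun i => if i = ε k then -2
      else max 0 (-((Emat B ε k * B * Fmat B ε k) i k))) = c' := by
    funext i
    by_cases hi : i = ε k
    · simp [hi, hc']
    · simp [hi, hc', hB'col i]
  have hE' : Emat (Emat B ε k * B * Fmat B ε k) ε k = 1 + vecMulVec c' e1 := by
    rw [Emat_eq, hcfun]
  have hrfun : (fun j => if j = k then -2
      else max 0 ((Emat B ε k * B * Fmat B ε k) (ε k) j)) = r' := by
    funext j
    by_cases hj : j = k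
    · simp [hj, hr']
    · simp [hj, hr', hB'row j]
  have hF' : Fmat (Emat B ε k * B * Fmat B ε k) ε k = 1 + vecMulVec eK r' := by
    rw [Fmat_eq, hrfun]
  -- product identities
  have hcu : ∀ i, c' i - c i = u i := by
    intro i
    by_cases hi : i = ε k
    · simp [hi, hc, hc', hu, h0]
    · simp only [hc, hc', hu, if_neg hi]
      omega
  have hrv : ∀ j, r j - r' j = v j := by
    intro j
    by_cases hj : j = k
    · simp [hj, hr, hr', hv, h0]
    · simp only [hr, hr', hv, if_neg hj]
      omega
  have hsum1 : (∑ l, e1 l * c' l) = -2 := by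
    calc (∑ l, e1 l * c' l) = ∑ l, (if l = ε k then (-2 : ℤ) else 0) :=
          Finset.sum_congr rfl fun l _ => by
            by_cases hl : l = ε k <;> simp [he1, hc', hl]
      _ = -2 := by simp
  have hsum2 : (∑ l, e1 l * c l) = -2 := by
    calc (∑ l, e1 l * c l) = ∑ l, (if l = ε k then (-2 : ℤ) else 0) :=
          Finset.sum_congr rfl fun l _ => by
            by_cases hl : l = ε k <;> simp [he1, hc, hl]
      _ = -2 := by simp
  have hsum3 : (∑ l, r l * eK l) = -2 := by
    calc (∑ l, r l * eK l) = ∑ l, (if l = k then (-2 : ℤ) else 0) :=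
          Finset.sum_congr rfl fun l _ => by
            by_cases hl : l = k <;> simp [heK, hr, hl]
      _ = -2 := by simp
  have hsum4 : (∑ l, e1 l * u l) = 0 := by
    calc (∑ l, e1 l * u l) = ∑ l, (if l = ε k then (0 : ℤ) else 0) :=
          Finset.sum_congr rfl fun l _ => by
            by_cases hl : l = ε k <;> simp [he1, hu, hl, h0]
      _ = 0 := by simp
  have hsum5 : (∑ l, v l * eK l) = 0 := by
    calc (∑ l, v l * eK l) = ∑ l, (if l = k then (0 : ℤ) else 0) :=
          Finset.sum_congr rfl fun l _ => by
            by_cases hl : l = k <;> simp [heK, hv, hl, h0]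
      _ = 0 := by simp
  have hEE' : Emat B ε k * Emat (Emat B ε k * B * Fmat B ε k) ε k
      = 1 + vecMulVec u e1 := by
    rw [hE', hE, Matrix.add_mul, Matrix.one_mul, Matrix.mul_add, Matrix.mul_one, vmv_mul_vmv,
      hsum1]
    have : vecMulVec u e1 = vecMulVec c' e1 + vecMulVec c e1 + (-2 : ℤ) • vecMulVec c e1 := by
      ext i j
      simp only [vecMulVec_apply, Matrix.add_apply, Matrix.smul_apply, smul_eq_mul]
      rw [← hcu i]; ring
    rw [this]; abel
  have hE'E : Emat (Emat B ε k * B * Fmat B ε k) ε k * Emat B ε k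
      = 1 - vecMulVec u e1 := by
    rw [hE', hE, Matrix.add_mul, Matrix.one_mul, Matrix.mul_add, Matrix.mul_one, vmv_mul_vmv,
      hsum2]
    have : -vecMulVec u e1 = vecMulVec c e1 + vecMulVec c' e1 + (-2 : ℤ) • vecMulVec c' e1 := by
      ext i j
      simp only [vecMulVec_apply, Matrix.add_apply, Matrix.neg_apply,
        Matrix.smul_apply, smul_eq_mul]
      rw [← hcu i]; ring
    rw [show (1 : Matrix (Fin m) (Fin m) ℤ) - vecMulVec u e1
        = 1 + -vecMulVec u e1 by abel, this]
    abel
  have hFF' : Fmat B ε k * Fmat (Emat B ε k * B * Fmat B ε k) ε k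
      = 1 + vecMulVec eK v := by
    rw [hF', hF, Matrix.add_mul, Matrix.one_mul, Matrix.mul_add, Matrix.mul_one, vmv_mul_vmv,
      hsum3]
    have : vecMulVec eK v = vecMulVec eK r' + vecMulVec eK r + (-2 : ℤ) • vecMulVec eK r' := by
      ext i j
      simp only [vecMulVec_apply, Matrix.add_apply, Matrix.smul_apply, smul_eq_mul]
      rw [← hrv j]; ring
    rw [this]; abel
  constructor
  · -- Λ part
    have hstep : (Emat (Emat B ε k * B * Fmat B ε k) ε k).transpose
        * ((Emat B ε k).transpose * Λ * Emat B ε k)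
        * Emat (Emat B ε k * B * Fmat B ε k) ε k
        = (Emat B ε k * Emat (Emat B ε k * B * Fmat B ε k) ε k)ᵀ * Λ
          * (Emat B ε k * Emat (Emat B ε k * B * Fmat B ε k) ε k) := by
      simp only [Matrix.transpose_mul, Matrix.mul_assoc]
    rw [hstep, hEE']
    have hPt : (1 + vecMulVec u e1)ᵀ = 1 + vecMulVec e1 u := by
      rw [Matrix.transpose_add, Matrix.transpose_one, vmv_transpose]
    rw [hPt]
    have hvM : Matrix.vecMul u Λ = fun j => d k * e1 j := by
      funext j
      have h1 : Matrix.vecMul u Λ j = ∑ l, B l k * Λ l j := by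
        simp [Matrix.vecMul, dotProduct, hu]
      rw [h1, hcomp k j, he1]
      by_cases hj : ε k = j
      · simp [hj]
      · have hj' : ¬j = ε k := fun h => hj h.symm
        simp [hj, hj']
    have hPtΛ : vecMulVec e1 u * Λ = vecMulVec e1 (fun j => d k * e1 j) := by
      rw [vmv_mul_mat, hvM]
    have hΛP : Λ * vecMulVec u e1 = -vecMulVec e1 (fun j => d k * e1 j) := by
      rw [mul_vmv]
      ext i j
      have h1 : Λ.mulVec u i = ∑ l, Λ i l * B l k := by
        simp [Matrix.mulVec, dotProduct, hu]
      have h2 : (∑ l, Λ i l * B l k) = ∑ l, -(B l k * Λ l i) :=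
        Finset.sum_congr rfl fun l _ => by rw [hskew i l]; ring
      have h3 : Λ.mulVec u i = -(d k * e1 i) := by
        rw [h1, h2, Finset.sum_neg_distrib, hcomp k i, he1]
        by_cases hi : ε k = i
        · simp [hi]
        · have hi' : ¬i = ε k := fun h => hi h.symm
          simp [hi, hi']
      simp only [vecMulVec_apply, Matrix.neg_apply, h3]
      ring
    have hzero : vecMulVec e1 (fun j => d k * e1 j) * vecMulVec u e1 = 0 := by
      rw [vmv_mul_vmv]
      have : (∑ l, d k * e1 l * u l) = 0 := by
        have h1 : (∑ l, d k * e1 l * u l) = d k * ∑ l, e1 l * u l := by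
          rw [Finset.mul_sum]
          exact Finset.sum_congr rfl fun l _ => by ring
        rw [h1, hsum4, mul_zero]
      rw [this, zero_smul]
    simp only [Matrix.add_mul, Matrix.mul_add, Matrix.one_mul, Matrix.mul_one]
    rw [hPtΛ, hΛP, hzero]
    abel
  · -- B part
    have hstep : Emat (Emat B ε k * B * Fmat B ε k) ε k
        * (Emat B ε k * B * Fmat B ε k)
        * Fmat (Emat B ε k * B * Fmat B ε k) ε k
        = (Emat (Emat B ε k * B * Fmat B ε k) ε k * Emat B ε k) * B
          * (Fmat B ε k * Fmat (Emat B ε k * B * Fmat B ε k) ε k) := by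
      simp only [Matrix.mul_assoc]
    rw [hstep, hE'E, hFF']
    have hBQ : B * vecMulVec eK v = vecMulVec u v := by
      rw [mul_vmv, hmulVec]
    have hPB : vecMulVec u e1 * B = vecMulVec u v := by
      rw [vmv_mul_mat, hvecMul]
    simp only [Matrix.sub_mul, Matrix.mul_add, Matrix.mul_sub, Matrix.one_mul, Matrix.mul_one]
    rw [hPB, hBQ, vmv_mul_vmv, hsum5, zero_smul]
    abel
end

section
/- Compatibility of the infinite pair (Λ, B̃) for a simply-laced g: with B̃ the Î×Î matrix given by B̃_{(i,r),(j,s)} = 1 if (i=j and s=r+2) or (i∼j and s=r-1), -1 if (i=j and s=r-2) or (i∼j and s=r+1), 0 otherwise; and Λ given for s > r by Λ_{(i,r),(j,s)} = F_{ij}(s-r) = -Σ_{k≥1, s-r≥2k-1} C̃_{ij}(s-r-2k+1) (extended skew-symmetrically); then (B̃^T Λ)_{(i,r),(j,s)} = -2 δ_{(i,r),(j,s)} for all (i,r),(j,s) ∈ Î. -/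
/-- Compatibility of the infinite pair `(Λ, B̃)` for a simply-laced `g`.
The index set is `I × ℤ` (containing the component `Î`); `B̃` is given by
`B̃_{(i,r),(j,s)} = 1` if (`i=j` and `s=r+2`) or (`i∼j` and `s=r-1`), `-1` if (`i=j` and
`s=r-2`) or (`i∼j` and `s=r+1`), `0` otherwise; `Λ_{(i,r),(j,s)} = F_{ij}(s-r)` where
`F_{ij}(m) = -Σ_{k≥1, m≥2k-1} C̃_{ij}(m-2k+1)` for `m ≥ 0`, extended skew-symmetrically.
Then `(B̃ᵀ Λ)_{(i,r),(j,s)} = -2 δ_{(i,r),(j,s)}` (the sum over `I × ℤ` has finite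
support and is taken with `finsum`). The coefficients `C̃_{ij}(m)` satisfy the standard
recursion properties of the inverse quantum Cartan matrix. -/
theorem stmt9 {I : Type*} [Fintype I] [DecidableEq I]
    (Adj : I → I → Prop) [DecidableRel Adj]
    (hsymm : ∀ i j, Adj i j → Adj j i) (hirr : ∀ i, ¬ Adj i i)
    (c F : I → I → ℤ → ℤ)
    (hc0 : ∀ i j, ∀ m : ℤ, m ≤ 0 → c i j m = 0)
    (hc1 : ∀ i j, c i j 1 = if i = j then 1 else 0)
    (hcsym : ∀ i j, ∀ m : ℤ, c i j m = c j i m)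
    (hrec : ∀ i j, ∀ m : ℤ, 1 ≤ m →
      c i j (m - 1) + c i j (m + 1)
        = ∑ k ∈ Finset.univ.filter (fun k => Adj k j), c i k m)
    (hF : ∀ i j, ∀ m : ℤ, 0 ≤ m →
      F i j m = - ∑ k ∈ Finset.Icc (1 : ℤ) ((m + 1) / 2), c i j (m - 2 * k + 1))
    (hFanti : ∀ i j, ∀ m : ℤ, F i j (-m) = - F j i m)
    (Bt Λ : I × ℤ → I × ℤ → ℤ)
    (hBt : ∀ p q : I × ℤ, Bt p q =
      if (p.1 = q.1 ∧ q.2 = p.2 + 2) ∨ (Adj p.1 q.1 ∧ q.2 = p.2 - 1) then 1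
      else if (p.1 = q.1 ∧ q.2 = p.2 - 2) ∨ (Adj p.1 q.1 ∧ q.2 = p.2 + 1) then -1
      else 0)
    (hΛ : ∀ p q : I × ℤ, Λ p q = F p.1 q.1 (q.2 - p.2)) :
    ∀ p q : I × ℤ, ∑ᶠ x : I × ℤ, Bt x p * Λ x q = if p = q then -2 else 0 := by
  -- the basic step relation for F
  have hstep : ∀ i j, ∀ m : ℤ, 0 ≤ m → F i j (m+2) = F i j m - c i j (m+1) := by
    intro i j m hm
    rw [hF i j (m+2) (by omega), hF i j m hm]
    have h1 : (m + 2 + 1) / 2 = (m+1)/2 + 1 := by omega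
    rw [h1]
    have h2 : Finset.Icc (1:ℤ) ((m+1)/2 + 1) = insert 1 (Finset.Icc (2:ℤ) ((m+1)/2+1)) := by
      ext x; simp [Finset.mem_Icc]; omega
    have h3 : Finset.Icc (2:ℤ) ((m+1)/2 + 1)
        = (Finset.Icc (1:ℤ) ((m+1)/2)).map (addLeftEmbedding 1) := by
      rw [Finset.map_add_left_Icc]; congr 1 <;> omega
    rw [h2, Finset.sum_insert (by simp), h3, Finset.sum_map]
    have hb : ∀ k : ℤ, c i j (m + 2 - 2 * (addLeftEmbedding (1:ℤ) k) + 1) = c i j (m - 2*k + 1) := by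
      intro k
      have : (addLeftEmbedding (1:ℤ) k) = 1 + k := rfl
      rw [this]; ring_nf
    rw [Finset.sum_congr rfl (fun k _ => hb k)]
    have hb2 : c i j (m + 2 - 2*1 + 1) = c i j (m+1) := by ring_nf
    rw [hb2]; ring
  have hstep' : ∀ i j, ∀ m : ℤ, 2 ≤ m → F i j m = F i j (m-2) - c i j (m-1) := by
    intro i j m hm
    have h := hstep i j (m-2) (by omega)
    rw [show m-2+2 = m from by ring, show m-2+1 = m-1 from by ring] at h
    exact h
  have hF0 : ∀ i j, F i j 0 = 0 := by
    intro i j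
    rw [hF i j 0 le_rfl]
    norm_num
  have hF1 : ∀ i j, F i j 1 = 0 := by
    intro i j
    rw [hF i j 1 (by norm_num)]
    norm_num
    exact hc0 i j 0 le_rfl
  have hFm1 : ∀ i j, F i j (-1) = 0 := by
    intro i j
    have h := hFanti i j 1
    rw [hF1] at h
    simpa using h
  have hc2 : ∀ i j, c i j 2 = if Adj i j then 1 else 0 := by
    intro i j
    have h := hrec i j 1 le_rfl
    have h0 : c i j (1-1) = 0 := hc0 i j _ (by norm_num)
    rw [h0, zero_add] at h
    rw [show (2:ℤ) = 1 + 1 from by ring, h]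
    simp only [hc1, Finset.sum_ite_eq, Finset.mem_filter, Finset.mem_univ, true_and]
  have hF2 : ∀ i j, F i j 2 = -(if i = j then 1 else 0) := by
    intro i j
    have h := hstep i j 0 le_rfl
    rw [show (0:ℤ)+2 = 2 from by norm_num, show (0:ℤ)+1 = 1 from by norm_num, hF0, hc1] at h
    rw [h]; ring
  have hF3 : ∀ i j, F i j 3 = -(if Adj i j then 1 else 0) := by
    intro i j
    have h := hstep i j 1 (by norm_num)
    rw [show (1:ℤ)+2 = 3 from by norm_num, show (1:ℤ)+1 = 2 from by norm_num, hF1, hc2] at h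
    rw [h]; ring
  -- the key computation
  have key : ∀ i j, ∀ m : ℤ,
      F i j (m+2) - F i j (m-2)
        + ∑ a ∈ Finset.univ.filter (fun a => Adj a i), (F a j (m-1) - F a j (m+1))
      = if i = j ∧ m = 0 then -2 else 0 := by
    intro i j m
    by_cases hm2 : 2 ≤ m
    · -- m ≥ 2
      rw [if_neg (by omega)]
      have hA : F i j (m+2) = F i j m - c i j (m+1) := hstep i j m (by omega)
      have hB : F i j m = F i j (m-2) - c i j (m-1) := hstep' i j m (by omega)
      have hsum : ∑ a ∈ Finset.univ.filter (fun a => Adj a i), (F a j (m-1) - F a j (m+1))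
          = ∑ a ∈ Finset.univ.filter (fun a => Adj a i), c j a m := by
        refine Finset.sum_congr rfl fun a _ => ?_
        have h := hstep' a j (m+1) (by omega)
        rw [show m+1-2 = m-1 from by ring, show m+1-1 = m from by ring] at h
        rw [h, hcsym a j m]; ring
      rw [hA, hB, hsum, ← hrec j i m (by omega), hcsym j i (m-1), hcsym j i (m+1)]
      ring
    · by_cases hm1 : m = 1
      · subst hm1
        rw [if_neg (by omega)]
        rw [show (1:ℤ)+2 = 3 from by norm_num, show (1:ℤ)-2 = -1 from by norm_num,
          show (1:ℤ)-1 = 0 from by norm_num, show (1:ℤ)+1 = 2 from by norm_num]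
        rw [hF3, hFm1]
        have hsum : ∑ a ∈ Finset.univ.filter (fun a => Adj a i), (F a j 0 - F a j 2)
            = ∑ a ∈ Finset.univ.filter (fun a => Adj a i), (if a = j then (1:ℤ) else 0) := by
          refine Finset.sum_congr rfl fun a _ => ?_
          rw [hF0, hF2]; simp
        rw [hsum, Finset.sum_ite_eq' _ j (fun _ => (1:ℤ))]
        simp only [Finset.mem_filter, Finset.mem_univ, true_and]
        by_cases h : Adj i j
        · rw [if_pos h, if_pos (hsymm i j h)]; ring
        · rw [if_neg h, if_neg (fun h' => h (hsymm j i h'))]; ring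
      · by_cases hm0 : m = 0
        · subst hm0
          rw [show (0:ℤ)+2 = 2 from by norm_num, show (0:ℤ)-2 = -2 from by norm_num,
            show (0:ℤ)-1 = -1 from by norm_num, show (0:ℤ)+1 = 1 from by norm_num]
          simp only [eq_self_iff_true, and_true]
          have hB : F i j (-2) = if j = i then (1:ℤ) else 0 := by
            have h := hFanti i j 2
            rw [hF2] at h
            rw [show ((-2 : ℤ)) = -(2:ℤ) from by ring, h]; ring
          have hsum : ∑ a ∈ Finset.univ.filter (fun a => Adj a i), (F a j (-1) - F a j 1)
              = 0 := by
            refine Finset.sum_eq_zero fun a _ => ?_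
            rw [hFm1, hF1]; ring
          rw [hF2, hB, hsum]
          rcases eq_or_ne i j with h | h
          · subst h; simp
          · rw [if_neg h, if_neg (Ne.symm h), if_neg h]; ring
        · by_cases hmm1 : m = -1
          · subst hmm1
            rw [if_neg (by omega)]
            rw [show (-1:ℤ)+2 = 1 from by norm_num, show (-1:ℤ)-2 = -3 from by norm_num,
              show (-1:ℤ)-1 = -2 from by norm_num, show (-1:ℤ)+1 = 0 from by norm_num]
            have hA : F i j (-3) = if Adj j i then (1:ℤ) else 0 := by
              have h := hFanti i j 3
              rw [hF3] at h
              rw [show ((-3 : ℤ)) = -(3:ℤ) from by ring, h]; ring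
            have hsum : ∑ a ∈ Finset.univ.filter (fun a => Adj a i), (F a j (-2) - F a j 0)
                = ∑ a ∈ Finset.univ.filter (fun a => Adj a i), (if j = a then (1:ℤ) else 0) := by
              refine Finset.sum_congr rfl fun a _ => ?_
              have h := hFanti a j 2
              rw [hF2] at h
              rw [hF0, show ((-2 : ℤ)) = -(2:ℤ) from by ring, h]; ring
            rw [hF1, hA, hsum, Finset.sum_ite_eq _ j (fun _ => (1:ℤ))]
            simp only [Finset.mem_filter, Finset.mem_univ, true_and]
            by_cases h : Adj j i
            · rw [if_pos h]; ring
            · rw [if_neg h]; ring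
          · -- m ≤ -2
            have hm : m ≤ -2 := by omega
            rw [if_neg (by omega)]
            have eA : F i j (m+2) = -F j i (-m-2) := by
              have h := hFanti i j (-m-2)
              rw [show -(-m-2) = m+2 from by ring] at h
              exact h
            have eB : F i j (m-2) = -F j i (-m+2) := by
              have h := hFanti i j (-m+2)
              rw [show -(-m+2) = m-2 from by ring] at h
              exact h
            have h1 : F j i (-m+2) = F j i (-m) - c j i (-m+1) := by
              have h := hstep' j i (-m+2) (by omega)
              rw [show -m+2-2 = -m from by ring, show -m+2-1 = -m+1 from by ring] at h
              exact h
            have h2 : F j i (-m) = F j i (-m-2) - c j i (-m-1) := by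
              have h := hstep' j i (-m) (by omega)
              rw [show -m-2 = -m-2 from rfl, show -m-1 = -m-1 from rfl] at h
              exact h
            have hsum : ∑ a ∈ Finset.univ.filter (fun a => Adj a i), (F a j (m-1) - F a j (m+1))
                = ∑ a ∈ Finset.univ.filter (fun a => Adj a i), c j a (-m) := by
              refine Finset.sum_congr rfl fun a _ => ?_
              have e1 : F a j (m-1) = -F j a (-m+1) := by
                have h := hFanti a j (-m+1)
                rw [show -(-m+1) = m-1 from by ring] at h
                exact h
              have e2 : F a j (m+1) = -F j a (-m-1) := by
                have h := hFanti a j (-m-1)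
                rw [show -(-m-1) = m+1 from by ring] at h
                exact h
              have h3 : F j a (-m+1) = F j a (-m-1) - c j a (-m) := by
                have h := hstep' j a (-m+1) (by omega)
                rw [show -m+1-2 = -m-1 from by ring, show -m+1-1 = -m from by ring] at h
                exact h
              rw [e1, e2, h3]; ring
            have hs := hrec j i (-m) (by omega)
            rw [show -m - 1 = -m - 1 from rfl] at hs
            rw [eA, eB, h1, h2, hsum, ← hs]
            ring
  -- main computation
  intro p q
  obtain ⟨i, r⟩ := p
  obtain ⟨j, s⟩ := q
  have hsupp : Function.support (fun x : I × ℤ => Bt x (i,r) * Λ x (j,s))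
      ⊆ ↑((Finset.univ ×ˢ ({r-2, r-1, r+1, r+2} : Finset ℤ) : Finset (I × ℤ))) := by
    intro x hx
    rw [Function.mem_support] at hx
    rw [Finset.mem_coe, Finset.mem_product]
    refine ⟨Finset.mem_univ _, ?_⟩
    by_contra hmem
    simp only [Finset.mem_insert, Finset.mem_singleton] at hmem
    push_neg at hmem
    apply hx
    have hz : Bt x (i, r) = 0 := by
      rw [hBt]
      rw [if_neg, if_neg]
      · rintro (⟨-, h'⟩ | ⟨-, h'⟩) <;> omega
      · rintro (⟨-, h'⟩ | ⟨-, h'⟩) <;> omega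
    rw [hz, zero_mul]
  rw [finsum_eq_finset_sum_of_support_subset _ hsupp, Finset.sum_product]
  have hexp : ∀ g : ℤ → ℤ, ∑ t ∈ ({r-2, r-1, r+1, r+2} : Finset ℤ), g t
      = g (r-2) + g (r-1) + g (r+1) + g (r+2) := by
    intro g
    rw [Finset.sum_insert (by intro hmem; simp only [Finset.mem_insert, Finset.mem_singleton] at hmem; omega),
      Finset.sum_insert (by intro hmem; simp only [Finset.mem_insert, Finset.mem_singleton] at hmem; omega),
      Finset.sum_insert (by intro hmem; simp only [Finset.mem_singleton] at hmem; omega),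
      Finset.sum_singleton]
    ring
  have e1 : ∀ a, Bt (a, r-2) (i, r) = if a = i then 1 else 0 := by
    intro a
    rw [hBt]
    by_cases h : a = i
    · rw [if_pos (Or.inl ⟨h, by ring⟩), if_pos h]
    · rw [if_neg, if_neg, if_neg h]
      · rintro (⟨h', -⟩ | ⟨-, h'⟩)
        · exact h h'
        · omega
      · rintro (⟨h', -⟩ | ⟨-, h'⟩)
        · exact h h'
        · omega
  have e2 : ∀ a, Bt (a, r-1) (i, r) = if Adj a i then -1 else 0 := by
    intro a
    rw [hBt, if_neg]
    · by_cases h : Adj a i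
      · rw [if_pos (Or.inr ⟨h, by ring⟩), if_pos h]
      · rw [if_neg, if_neg h]
        rintro (⟨-, h'⟩ | ⟨h', -⟩)
        · omega
        · exact h h'
    · rintro (⟨-, h'⟩ | ⟨-, h'⟩) <;> omega
  have e3 : ∀ a, Bt (a, r+1) (i, r) = if Adj a i then 1 else 0 := by
    intro a
    rw [hBt]
    by_cases h : Adj a i
    · rw [if_pos (Or.inr ⟨h, by ring⟩), if_pos h]
    · rw [if_neg, if_neg, if_neg h]
      · rintro (⟨-, h'⟩ | ⟨h', -⟩)
        · omega
        · exact h h'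
      · rintro (⟨-, h'⟩ | ⟨h', -⟩)
        · omega
        · exact h h'
  have e4 : ∀ a, Bt (a, r+2) (i, r) = if a = i then -1 else 0 := by
    intro a
    rw [hBt, if_neg]
    · by_cases h : a = i
      · rw [if_pos (Or.inl ⟨h, by ring⟩), if_pos h]
      · rw [if_neg, if_neg h]
        rintro (⟨h', -⟩ | ⟨-, h'⟩)
        · exact h h'
        · omega
    · rintro (⟨-, h'⟩ | ⟨-, h'⟩) <;> omega
  have hinner : ∀ a, ∑ t ∈ ({r-2, r-1, r+1, r+2} : Finset ℤ), Bt (a,t) (i,r) * Λ (a,t) (j,s)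
      = (if a = i then F a j (s-r+2) else 0)
        + (if Adj a i then (F a j (s-r-1) - F a j (s-r+1)) else 0)
        + (if a = i then -F a j (s-r-2) else 0) := by
    intro a
    rw [hexp (fun t => Bt (a,t) (i,r) * Λ (a,t) (j,s))]
    simp only [hΛ, e1, e2, e3, e4]
    rw [show s - (r-2) = s-r+2 from by ring, show s - (r-1) = s-r+1 from by ring,
      show s - (r+1) = s-r-1 from by ring, show s - (r+2) = s-r-2 from by ring]
    rcases eq_or_ne a i with h | h
    · subst h
      simp [hirr a]
    · by_cases h' : Adj a i <;> simp [h, h'] <;> ring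
  rw [Finset.sum_congr rfl (fun a _ => hinner a)]
  rw [Finset.sum_add_distrib, Finset.sum_add_distrib,
    Finset.sum_ite_eq' Finset.univ i (fun a => F a j (s-r+2)),
    Finset.sum_ite_eq' Finset.univ i (fun a => -F a j (s-r-2)),
    ← Finset.sum_filter]
  simp only [Finset.mem_univ, if_pos]
  have hfin := key i j (s-r)
  rw [show s-r+2 = s-r+2 from rfl] at hfin
  have hgoal : (if ((i,r) : I × ℤ) = (j,s) then (-2:ℤ) else 0) = if i = j ∧ s - r = 0 then -2 else 0 := by
    by_cases h : i = j ∧ s - r = 0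
    · rw [if_pos h, if_pos (by obtain ⟨h1, h2⟩ := h; rw [h1, show r = s from by omega])]
    · rw [if_neg h, if_neg]
      intro he
      apply h
      have h1 : i = j := congrArg Prod.fst he
      have h2 : r = s := congrArg Prod.snd he
      exact ⟨h1, by omega⟩
  rw [hgoal, ← hfin]
  ring
end

section
/- The quiver on I × ℤ defined by arrows (i,r) → (j,s) iff C_{ij} ≠ 0 and s = r + C_{ij} (C the Cartan matrix of a simply-laced g with connected Dynkin diagram) has exactly two connected components, given by the parity classes: (i,r) and (j,s) lie in the same component iff r - s ≡ d(i,j) mod 2, where d(i,j) is the graph distance between i and j in the Dynkin diagram. -/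
/-!
Along a vertical edge `(i, r) — (i, r + 2)` the parity of `r` is unchanged, and along a
horizontal edge `(i, r) — (j, r - 1)` both `r` and `d(k, i)` change parity, because adjacent
vertices of a tree have distances to `k` differing by exactly one. Hence `r + d(k, i) mod 2` is
constant on components. Conversely, a geodesic from `i` to `j` in the Dynkin diagram lifts to a
horizontal path from `(i, r)` to `(j, r - d(i, j))`, and vertical edges adjust the second
coordinate by any even amount.
-/

namespace SimpleGraph

variable {I : Type*} (G : SimpleGraph I)

/-- The symmetrization of the quiver `Γ̃` on `I × ℤ` attached to the Dynkin diagram `G`. -/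
def gammaTilde : SimpleGraph (I × ℤ) :=
  fromRel fun p q : I × ℤ => (p.1 = q.1 ∧ q.2 = p.2 + 2) ∨ (G.Adj p.1 q.1 ∧ q.2 = p.2 - 1)

variable {G}

lemma gammaTilde_adj_vertical (i : I) (r : ℤ) : G.gammaTilde.Adj (i, r) (i, r + 2) :=
  (fromRel_adj _ _ _).2 ⟨by simp, Or.inl (Or.inl ⟨rfl, rfl⟩)⟩

lemma gammaTilde_adj_horizontal {i j : I} (h : G.Adj i j) (r : ℤ) :
    G.gammaTilde.Adj (i, r) (j, r - 1) :=
  (fromRel_adj _ _ _).2 ⟨by simp [h.ne], Or.inl (Or.inr ⟨h, rfl⟩)⟩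

lemma gammaTilde_reachable_add_two_mul (i : I) (r t : ℤ) :
    G.gammaTilde.Reachable (i, r) (i, r + 2 * t) := by
  induction t using Int.induction_on with
  | zero => simp
  | succ n ih =>
    refine ih.trans ?_
    convert (gammaTilde_adj_vertical i (r + 2 * n)).reachable using 2
    ring
  | pred n ih =>
    refine ih.trans ?_
    convert (gammaTilde_adj_vertical i (r + 2 * (-n - 1))).reachable.symm using 2
    ring

lemma gammaTilde_reachable_sub_length {i j : I} (w : G.Walk i j) (r : ℤ) :
    G.gammaTilde.Reachable (i, r) (j, r - w.length) := by
  induction w generalizing r with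
  | nil => simp
  | cons h w ih =>
    refine (gammaTilde_adj_horizontal h r).reachable.trans ?_
    convert ih (r - 1) using 2
    push_cast [Walk.length_cons]
    ring

lemma gammaTilde_reachable_of_modEq (hconn : G.Connected) {p q : I × ℤ}
    (h : p.2 - q.2 ≡ G.dist p.1 q.1 [ZMOD 2]) : G.gammaTilde.Reachable p q := by
  obtain ⟨w, hw⟩ := hconn.exists_walk_length_eq_dist p.1 q.1
  obtain ⟨t, ht⟩ := h.symm.dvd
  refine (gammaTilde_reachable_sub_length w p.2).trans ?_
  convert gammaTilde_reachable_add_two_mul q.1 (p.2 - w.length) (-t) using 2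
  omega

lemma IsTree.modEq_of_gammaTilde_adj (hG : G.IsTree) (k : I) {p q : I × ℤ}
    (h : G.gammaTilde.Adj p q) : p.2 + G.dist k p.1 ≡ q.2 + G.dist k q.1 [ZMOD 2] := by
  obtain ⟨-, (⟨hi, hr⟩ | ⟨hij, hr⟩) | (⟨hi, hr⟩ | ⟨hij, hr⟩)⟩ := (fromRel_adj _ _ _).1 h
  all_goals unfold Int.ModEq
  · rw [← hi, hr]; omega
  · have := hG.dist_eq_dist_add_one_of_adj k hij; omega
  · rw [hi, hr]; omega
  · have := hG.dist_eq_dist_add_one_of_adj k hij; omega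

lemma IsTree.modEq_of_gammaTilde_reachable (hG : G.IsTree) {p q : I × ℤ}
    (h : G.gammaTilde.Reachable p q) : p.2 - q.2 ≡ G.dist p.1 q.1 [ZMOD 2] := by
  suffices ∀ k, p.2 + G.dist k p.1 ≡ q.2 + G.dist k q.1 [ZMOD 2] by
    have := this q.1
    rw [dist_self, dist_comm] at this
    unfold Int.ModEq at this ⊢
    omega
  intro k
  obtain ⟨w⟩ := h
  induction w with
  | nil => rfl
  | cons h _ ih => exact (hG.modEq_of_gammaTilde_adj k h).trans ih

lemma IsTree.gammaTilde_reachable_iff (hG : G.IsTree) (p q : I × ℤ) :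
    G.gammaTilde.Reachable p q ↔ p.2 - q.2 ≡ G.dist p.1 q.1 [ZMOD 2] :=
  ⟨hG.modEq_of_gammaTilde_reachable, gammaTilde_reachable_of_modEq hG.connected⟩

lemma IsTree.card_gammaTilde_connectedComponent (hG : G.IsTree) :
    Nat.card G.gammaTilde.ConnectedComponent = 2 := by
  obtain ⟨a⟩ := hG.connected.nonempty
  refine Nat.card_eq_two_iff.2 ⟨G.gammaTilde.connectedComponentMk (a, 0),
    G.gammaTilde.connectedComponentMk (a, 1), ?_, ?_⟩
  · rw [Ne, ConnectedComponent.eq, hG.gammaTilde_reachable_iff, dist_self]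
    unfold Int.ModEq
    omega
  · refine Set.eq_univ_of_forall fun C => C.ind fun p => ?_
    simp only [Set.mem_insert_iff, Set.mem_singleton_iff, ConnectedComponent.eq,
      hG.gammaTilde_reachable_iff]
    unfold Int.ModEq
    omega

end SimpleGraph

theorem stmt18_general {I : Type*} (G : SimpleGraph I)
    (hconn : G.Connected) (htree : G.IsAcyclic) :
    (∀ p q : I × ℤ,
      (SimpleGraph.fromRel (fun p q : I × ℤ =>
          (p.1 = q.1 ∧ q.2 = p.2 + 2) ∨ (G.Adj p.1 q.1 ∧ q.2 = p.2 - 1))).Reachable p q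
        ↔ Int.ModEq 2 (p.2 - q.2) (G.dist p.1 q.1))
    ∧ Nat.card (SimpleGraph.fromRel (fun p q : I × ℤ =>
        (p.1 = q.1 ∧ q.2 = p.2 + 2) ∨ (G.Adj p.1 q.1 ∧ q.2 = p.2 - 1))).ConnectedComponent
      = 2 :=
  have hG : G.IsTree := ⟨hconn, htree⟩
  ⟨hG.gammaTilde_reachable_iff, hG.card_gammaTilde_connectedComponent⟩

/-- The quiver on `I × ℤ` defined by arrows `(i,r) → (j,s)` iff
`C_{ij} ≠ 0` and `s = r + C_{ij}` (for a simply-laced `g` with connected Dynkin diagram,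
a tree, encoded as the simple graph `G`; the arrows are `(i,r) → (i,r+2)` and
`(i,r) → (j,r-1)` for `j ∼ i`), viewed as an undirected graph via symmetrization, has
exactly two connected components, given by the parity classes: `(i,r)` and `(j,s)` lie in
the same component iff `r - s ≡ d(i,j) (mod 2)`, where `d(i,j)` is the graph distance in
the Dynkin diagram. -/
theorem stmt18 {I : Type*} [Fintype I] (G : SimpleGraph I)
    (hconn : G.Connected) (htree : G.IsAcyclic) :
    (∀ p q : I × ℤ,
      (SimpleGraph.fromRel (fun p q : I × ℤ =>
          (p.1 = q.1 ∧ q.2 = p.2 + 2) ∨ (G.Adj p.1 q.1 ∧ q.2 = p.2 - 1))).Reachable p q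
        ↔ Int.ModEq 2 (p.2 - q.2) (G.dist p.1 q.1))
    ∧ Nat.card (SimpleGraph.fromRel (fun p q : I × ℤ =>
        (p.1 = q.1 ∧ q.2 = p.2 + 2) ∨ (G.Adj p.1 q.1 ∧ q.2 = p.2 - 1))).ConnectedComponent
      = 2 :=
  stmt18_general G hconn htree
end

section
/- In the quotient D_2 / ⟨C⟩ of the Drinfeld double by the central Casimir element C = EF - t^{1/2}K - t^{1/2}K' (with parameter q = -t^{1/2}), the set {E^α K^β K'^γ : α ≥ 0, β, γ ∈ ℤ} ∪ {K^β K'^γ F^α : α > 0, β, γ ∈ ℤ} spans the quotient over ℂ(t^{1/2}): every PBW monomial E^a K^b K'^c F^d can be rewritten modulo C as a combination of monomials involving only E's or only F's, since modulo C one has EF ≡ t^{1/2}K + t^{1/2}K', hence by induction E^a F^d reduces to Laurent monomials in K, K' times E^{a-d} (if a ≥ d) or F^{d-a} (if d ≥ a). -/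
section
variable {R A : Type*} [Field R] [Ring A] [Algebra R A]

lemma auxpow (x v : A) (r : R) (h : v * x = r • (x * v)) (n : ℕ) :
    v ^ n * x = r ^ n • (x * v ^ n) := by
  induction n with
  | zero => simp
  | succ n ih =>
    rw [pow_succ, mul_assoc, h, mul_smul_comm, ← mul_assoc, ih, smul_mul_assoc, smul_smul,
      pow_succ, mul_comm (r ^ n) r, mul_assoc]

lemma auxzpow (x : A) (V : Aˣ) (r : Rˣ) (h : (V : A) * x = (r : R) • (x * (V : A))) (n : ℤ) :
    ((V ^ n : Aˣ) : A) * x = ((r ^ n : Rˣ) : R) • (x * ((V ^ n : Aˣ) : A)) := by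
  have hinv : ((V⁻¹ : Aˣ) : A) * x = ((r⁻¹ : Rˣ) : R) • (x * ((V⁻¹ : Aˣ) : A)) := by
    have h2 : x * ((V⁻¹ : Aˣ) : A) = (r : R) • (((V⁻¹ : Aˣ) : A) * x) := by
      have := congrArg (fun y => ((V⁻¹ : Aˣ) : A) * y * ((V⁻¹ : Aˣ) : A)) h
      simp only [mul_smul_comm, smul_mul_assoc] at this
      calc x * ((V⁻¹ : Aˣ) : A) = ((V⁻¹ : Aˣ) : A) * ((V : A) * x) * ((V⁻¹ : Aˣ) : A) := by
            rw [← mul_assoc, Units.inv_mul, one_mul]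
        _ = (r : R) • (((V⁻¹ : Aˣ) : A) * (x * (V : A)) * ((V⁻¹ : Aˣ) : A)) := by rw [this]
        _ = (r : R) • (((V⁻¹ : Aˣ) : A) * x) := by
            rw [mul_assoc, mul_assoc, Units.mul_inv, mul_one]
    rw [h2, smul_smul]
    simp
  cases n with
  | ofNat m =>
    simpa [Units.val_pow_eq_pow_val, zpow_natCast] using auxpow x (V : A) (r : R) h m
  | negSucc m =>
    simp only [zpow_negSucc, ← inv_pow, Units.val_pow_eq_pow_val]
    exact auxpow x ((V⁻¹ : Aˣ) : A) ((r⁻¹ : Rˣ) : R) hinv (m + 1)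

end

/-- In the quotient `D₂ / ⟨C⟩` of the Drinfeld double (at parameter
`q = -t^{1/2}`; here `s ∈ R` denotes the scalar `t^{1/2}` in the base field
`R = ℂ(t^{1/2})`) by the central Casimir element `C = EF - t^{1/2}K - t^{1/2}K'`, the set
`{E^α K^β K'^γ} ∪ {K^β K'^γ F^α}` spans the quotient over `R`: every PBW monomial
`E^a K^b K'^c F^d` can be rewritten modulo the ideal generated by `C` as an `R`-linear
combination of monomials involving only `E`'s or only `F`'s. -/
theorem stmt19 {R A : Type*} [Field R] [Ring A] [Algebra R A]
    (s : Rˣ) (E F : A) (K K' : Aˣ)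
    (h1 : (K : A) * E = ((s : R) * s) • (E * (K : A)))
    (h2 : (K' : A) * E = (((s⁻¹ : Rˣ) : R) * ((s⁻¹ : Rˣ) : R)) • (E * (K' : A)))
    (h3 : (K : A) * F = (((s⁻¹ : Rˣ) : R) * ((s⁻¹ : Rˣ) : R)) • (F * (K : A)))
    (h4 : (K' : A) * F = ((s : R) * s) • (F * (K' : A)))
    (h5 : (K : A) * (K' : A) = (K' : A) * (K : A))
    (h6 : E * F - F * E = (((s⁻¹ : Rˣ) : R) - (s : R)) • ((K : A) - (K' : A)))
    (C : A) (hC : C = E * F - (s : R) • ((K : A) + (K' : A)))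
    (hcentral : ∀ a : A, Commute C a) :
    ∀ (a d : ℕ) (b c : ℤ), ∃ y ∈ Submodule.span R
      ({x : A | ∃ (α : ℕ) (β γ : ℤ), x = E ^ α * ((K ^ β : Aˣ) : A) * ((K' ^ γ : Aˣ) : A)}
        ∪ {x : A | ∃ (α : ℕ) (β γ : ℤ),
            x = ((K ^ β : Aˣ) : A) * ((K' ^ γ : Aˣ) : A) * F ^ α}),
      E ^ a * ((K ^ b : Aˣ) : A) * ((K' ^ c : Aˣ) : A) * F ^ d - y ∈ Ideal.span {C} := by
  intro a d b c
  set Sset : Set A :=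
      ({x : A | ∃ (α : ℕ) (β γ : ℤ), x = E ^ α * ((K ^ β : Aˣ) : A) * ((K' ^ γ : Aˣ) : A)}
        ∪ {x : A | ∃ (α : ℕ) (β γ : ℤ),
            x = ((K ^ β : Aˣ) : A) * ((K' ^ γ : Aˣ) : A) * F ^ α}) with hSset
  set T : Submodule R A :=
      Submodule.span R Sset ⊔ (Ideal.span {C}).restrictScalars R with hT
  -- membership in the ideal
  have hmemI : ∀ w : A, w * C ∈ Ideal.span {C} := fun w =>
    Submodule.mem_span_singleton.mpr ⟨w, by rw [smul_eq_mul]⟩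
  -- scalar commutation facts
  set u : Rˣ := s * s with hu
  have h3' : (K : A) * F = ((u⁻¹ : Rˣ) : R) • (F * (K : A)) := by
    rw [h3]; congr 1
  have h4' : (K' : A) * F = ((u : Rˣ) : R) • (F * (K' : A)) := by
    rw [h4]; congr 1
  have hEF : E * F = C + (s : R) • ((K : A) + (K' : A)) := by
    rw [hC]; abel
  have hcK : Commute K K' := Units.ext (by rw [Units.val_mul, Units.val_mul, h5])
  -- closure of T under right multiplication by F
  have hmulF : ∀ x ∈ T, x * F ∈ T := by
    intro x hx
    obtain ⟨y, hy, z, hz, rfl⟩ := Submodule.mem_sup.mp hx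
    rw [add_mul]
    refine T.add_mem ?_ ?_
    · -- span part
      clear hz hx
      induction hy using Submodule.span_induction with
      | mem w hw =>
        rcases hw with ⟨α, β, γ, rfl⟩ | ⟨α, β, γ, rfl⟩
        · -- w = E^α K^β K'^γ
          cases α with
          | zero =>
            apply le_sup_left (a := Submodule.span R Sset)
            apply Submodule.subset_span
            right
            exact ⟨1, β, γ, by rw [pow_zero, one_mul, pow_one]⟩
          | succ n =>
            set kb : A := ((K ^ β : Aˣ) : A) with hkb
            set kc : A := ((K' ^ γ : Aˣ) : A) with hkc
            set cβ : R := (((u⁻¹ : Rˣ) ^ β : Rˣ) : R) with hcβ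
            set cγ : R := ((u ^ γ : Rˣ) : R) with hcγ
            have hkbF : kb * F = cβ • (F * kb) := auxzpow F K u⁻¹ h3' β
            have hkcF : kc * F = cγ • (F * kc) := auxzpow F K' u h4' γ
            have st1 : kb * kc * F = (cγ * cβ) • (F * kb * kc) := by
              rw [mul_assoc, hkcF, mul_smul_comm, ← mul_assoc, hkbF, smul_mul_assoc, smul_smul]
            have hKkb : (K : A) * kb = ((K ^ (β + 1) : Aˣ) : A) := by
              have : (K ^ (β + 1) : Aˣ) = K * K ^ β := by rw [add_comm, zpow_one_add]
              rw [this, Units.val_mul, hkb]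
            have hK'kc : (K' : A) * kc = ((K' ^ (γ + 1) : Aˣ) : A) := by
              have : (K' ^ (γ + 1) : Aˣ) = K' * K' ^ γ := by rw [add_comm, zpow_one_add]
              rw [this, Units.val_mul, hkc]
            have hK'kb : (K' : A) * kb = kb * (K' : A) := by
              have h := (hcK.symm.zpow_right β : Commute K' (K ^ β))
              have := congrArg (Units.val) h.eq
              rw [Units.val_mul, Units.val_mul] at this
              rw [hkb]; exact this
            have hK_m : (K : A) * (kb * kc) = ((K ^ (β + 1) : Aˣ) : A) * kc := by
              rw [← mul_assoc, hKkb]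
            have hK'_m : (K' : A) * (kb * kc) = kb * ((K' ^ (γ + 1) : Aˣ) : A) := by
              rw [← mul_assoc, hK'kb, mul_assoc, hK'kc]
            have hm : C * (kb * kc) = (kb * kc) * C := hcentral (kb * kc)
            have key : E ^ (n + 1) * kb * kc * F
                = (cγ * cβ) • ((E ^ n * kb * kc) * C)
                  + ((cγ * cβ) * (s : R)) • (E ^ n * ((K ^ (β + 1) : Aˣ) : A) * kc)
                  + ((cγ * cβ) * (s : R)) • (E ^ n * kb * ((K' ^ (γ + 1) : Aˣ) : A)) := by
              calc E ^ (n + 1) * kb * kc * F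
                  = E ^ (n + 1) * (kb * kc * F) := by simp only [mul_assoc]
                _ = (cγ * cβ) • (E ^ n * (E * F) * (kb * kc)) := by
                    rw [st1, mul_smul_comm, pow_succ]
                    congr 1
                    simp only [mul_assoc]
                _ = (cγ * cβ) • (E ^ n * (C + (s : R) • ((K : A) + (K' : A))) * (kb * kc)) := by
                    rw [hEF]
                _ = (cγ * cβ) • ((E ^ n * kb * kc) * C)
                  + ((cγ * cβ) * (s : R)) • (E ^ n * ((K ^ (β + 1) : Aˣ) : A) * kc)
                  + ((cγ * cβ) * (s : R)) • (E ^ n * kb * ((K' ^ (γ + 1) : Aˣ) : A)) := by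
                    simp only [mul_add, add_mul, smul_add, mul_smul_comm, smul_mul_assoc,
                      smul_smul, mul_assoc, add_assoc, hK_m, hK'_m, hm]
            rw [key]
            refine T.add_mem (T.add_mem ?_ ?_) ?_
            · exact T.smul_mem _ (le_sup_right (a := Submodule.span R Sset)
                (show _ ∈ (Ideal.span {C}).restrictScalars R from hmemI _))
            · refine T.smul_mem _ (le_sup_left (a := Submodule.span R Sset)
                (Submodule.subset_span (Or.inl ⟨n, β + 1, γ, rfl⟩)))
            · refine T.smul_mem _ (le_sup_left (a := Submodule.span R Sset)
                (Submodule.subset_span (Or.inl ⟨n, β, γ + 1, rfl⟩)))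
        · -- w = K^β K'^γ F^α
          apply le_sup_left (a := Submodule.span R Sset)
          apply Submodule.subset_span
          right
          exact ⟨α + 1, β, γ, by rw [pow_succ, ← mul_assoc]⟩
      | zero => rw [zero_mul]; exact T.zero_mem
      | add w₁ w₂ _ _ ih₁ ih₂ => rw [add_mul]; exact T.add_mem ih₁ ih₂
      | smul r w _ ih => rw [smul_mul_assoc]; exact T.smul_mem r ih
    · -- ideal part
      have hz' : z ∈ Ideal.span {C} := hz
      obtain ⟨w, hw⟩ := Submodule.mem_span_singleton.mp hz'
      rw [smul_eq_mul] at hw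
      apply le_sup_right (a := Submodule.span R Sset)
      show _ ∈ (Ideal.span {C}).restrictScalars R
      have : z * F = (w * F) * C := by
        rw [← hw, mul_assoc, (hcentral F).eq, ← mul_assoc]
      rw [this]
      exact hmemI _
  -- main induction on d
  suffices h : E ^ a * ((K ^ b : Aˣ) : A) * ((K' ^ c : Aˣ) : A) * F ^ d ∈ T by
    obtain ⟨y, hy, z, hz, hyz⟩ := Submodule.mem_sup.mp h
    exact ⟨y, hy, by rw [← hyz, add_sub_cancel_left]; exact hz⟩
  induction d with
  | zero =>
    apply le_sup_left (a := Submodule.span R Sset)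
    apply Submodule.subset_span
    left
    exact ⟨a, b, c, by rw [pow_zero, mul_one]⟩
  | succ d ih =>
    rw [pow_succ, ← mul_assoc]
    exact hmulF _ ih
end
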